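/- Let K be an algebraically closed field complete with respect to a nontrivial non-archimedean absolute value, with residue characteristic not 2, and let x be a point of the Berkovich affine line with |λ|_x = diam(x) = R > 1 (i.e., x = ζ_{c,R} with |c| ≤ R; take x = ζ_{0,R}). Then for the family f_λ(z) = z² + λ, the field H(x) (the completed residue field at x) does not contain a square root of the coordinate function λ, while the degree-2 extension H(x)(√λ) does; consequently each of the two fixed points of z ↦ z² + λ lying over the 'repelling pair' generates a degree-2 extension of H(x), so these type I repelling fixed points have multiplicity [H(ξ) : H(x)] = 2. -/

import Mathlib

/-!
The Gauss norm `|·|` of `K[λ]` at `ζ_{0,R}` is multiplicative, and the least index at which it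
is attained is additive under products (it is the order at `0` of the reduction). For
`A = λ` or `A = 1 - 4λ` this index is `1`, so `P²` and `A Q²` have least dominant indices of
different parity and `|P² - A Q²| ≥ |A| |Q|²` for all `P` and `Q ≠ 0`. A square root `h` of `A`
in `H` is therefore impossible: a rational function `u = P / Q` with `|u - h| < |h|` would give
`|u² - A| < |h|² = |A|`, that is `|P² - A Q²| < |A| |Q|²`. Finally, a root `z` of `z² - z + λ`
would make `1 - 4λ = (2z - 1)²` a square.
-/

open Polynomial

/-- The norm `|P|_{ζ_{0,R}} = max_k ‖c_k‖ R^k` of a polynomial `P = Σ c_k λ^k` at the point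
`ζ_{0,R}` of the Berkovich parameter line. -/
noncomputable def gaussNormR {K : Type*} [NormedField K] (R : ℝ) (P : Polynomial K) : ℝ :=
  (Finset.range (P.natDegree + 1)).sup'
    (Finset.nonempty_range_iff.mpr (Nat.succ_ne_zero _))
    (fun k => ‖P.coeff k‖ * R ^ k)

namespace Polynomial

open Finset.HasAntidiagonal

section MinGaussNormIndex

variable {R : Type*} [Ring R] (v : AbsoluteValue R ℝ) (c : ℝ)

def IsMinGaussNormIndex (p : R[X]) (i : ℕ) : Prop :=
  p.gaussNorm v c = v (p.coeff i) * c ^ i ∧ ∀ j < i, v (p.coeff j) * c ^ j < p.gaussNorm v c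

variable {v c}

lemma gaussNorm_le {p : R[X]} {M : ℝ} (h : ∀ i, v (p.coeff i) * c ^ i ≤ M) :
    p.gaussNorm v c ≤ M := by
  obtain ⟨i, hi⟩ := p.exists_eq_gaussNorm v c
  exact hi ▸ h i

@[simp]
lemma gaussNorm_neg (p : R[X]) : (-p).gaussNorm v c = p.gaussNorm v c := by
  simp_rw [gaussNorm, support_neg, coeff_neg, map_neg_eq_map]

lemma IsMinGaussNormIndex.neg {p : R[X]} {i : ℕ} (h : p.IsMinGaussNormIndex v c i) :
    (-p).IsMinGaussNormIndex v c i := by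
  simpa [IsMinGaussNormIndex] using h

lemma IsMinGaussNormIndex.ne_zero {p : R[X]} {i : ℕ} (h : p.IsMinGaussNormIndex v c i)
    (hi : 0 < i) : p ≠ 0 := by
  rintro rfl
  simpa using h.2 0 hi

lemma isMinGaussNormIndex_C_add_C_mul_X (hc : 0 ≤ c) {a b : R} (hab : v a < v b * c) :
    (C a + C b * X).IsMinGaussNormIndex v c 1 := by
  have hnorm : (C a + C b * X).gaussNorm v c = v b * c := by
    have h1 := le_gaussNorm v (C a + C b * X) hc 1
    simp at h1
    refine le_antisymm (gaussNorm_le fun k => ?_) h1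
    match k with
    | 0 => simpa using hab.le
    | 1 => simp
    | n + 2 => simpa using mul_nonneg (v.nonneg b) hc
  refine ⟨by simp [hnorm], fun j hj => ?_⟩
  obtain rfl : j = 0 := by omega
  simpa [hnorm] using hab

lemma IsMinGaussNormIndex.mul (hna : IsNonarchimedean v) (hc : 0 < c) {p q : R[X]} {i j : ℕ}
    (hp : p.IsMinGaussNormIndex v c i) (hq : q.IsMinGaussNormIndex v c j) (hp0 : p ≠ 0)
    (hq0 : q ≠ 0) : (p * q).IsMinGaussNormIndex v c (i + j) := by
  have hpos : ∀ r : R[X], r ≠ 0 → 0 < r.gaussNorm v c := fun r hr =>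
    (gaussNorm_nonneg v r hc.le).lt_of_ne'
      ((gaussNorm_eq_zero_iff v r (fun _ => v.eq_zero.mp) hc).not.mpr hr)
  have hsmall : ∀ a b, a < i ∨ b < j →
      v (p.coeff a * q.coeff b) * c ^ (a + b) < p.gaussNorm v c * q.gaussNorm v c := by
    intro a b hab
    have ha := le_gaussNorm v p hc.le a
    have hb := le_gaussNorm v q hc.le b
    rw [map_mul, pow_add, mul_mul_mul_comm]
    rcases hab with ha' | hb'
    · exact mul_lt_mul_of_lt_of_le_of_nonneg_of_pos (hp.2 a ha') hb (by positivity) (hpos q hq0)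
    · exact mul_lt_mul_of_le_of_lt_of_nonneg_of_pos ha (hq.2 b hb') (by positivity) (hpos p hp0)
  have hcorner : v (p.coeff i * q.coeff j) * c ^ (i + j) = p.gaussNorm v c * q.gaussNorm v c := by
    rw [hp.1, hq.1, map_mul, pow_add]
    ring
  rw [IsMinGaussNormIndex, gaussNorm_mul hna hc]
  refine ⟨?_, fun n hn => ?_⟩
  · have hmax : ∀ x ∈ antidiagonal (i + j), x ≠ (i, j) →
        v (p.coeff x.1 * q.coeff x.2) < v (p.coeff i * q.coeff j) := by
      rintro ⟨a, b⟩ hx hne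
      rw [mem_antidiagonal] at hx
      have hab : a < i ∨ b < j := by
        by_contra! h
        exact hne (Prod.ext (by omega) (by omega))
      refine lt_of_mul_lt_mul_right (a := c ^ (i + j)) ?_ (by positivity)
      rw [hcorner, ← hx]
      exact hsmall a b hab
    rw [coeff_mul, hna.apply_sum_eq_of_lt (fun _ => (map_neg_eq_map v _).symm)
      (k := (i, j)) (mem_antidiagonal.mpr rfl) hmax, hcorner]
  · obtain ⟨x, hx, hle⟩ := hna.finset_image_add_of_nonempty
      (fun x => p.coeff x.1 * q.coeff x.2) (⟨(0, n), by simp⟩ : (antidiagonal n).Nonempty)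
    rw [mem_antidiagonal] at hx
    calc v ((p * q).coeff n) * c ^ n ≤ v (p.coeff x.1 * q.coeff x.2) * c ^ (x.1 + x.2) := by
          rw [coeff_mul, hx]; gcongr
      _ < _ := hsmall _ _ (by omega)

lemma le_gaussNorm_add_of_lt (hna : IsNonarchimedean v) (hc : 0 ≤ c) {p q : R[X]} {k : ℕ}
    (h : v (q.coeff k) * c ^ k < v (p.coeff k) * c ^ k) :
    v (p.coeff k) * c ^ k ≤ (p + q).gaussNorm v c := by
  have hvk : v ((p + q).coeff k) = v (p.coeff k) := by
    rw [coeff_add, hna.add_eq_left_of_lt (lt_of_mul_lt_mul_right h (by positivity))]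
  exact hvk ▸ le_gaussNorm v (p + q) hc k

lemma max_le_gaussNorm_add (hna : IsNonarchimedean v) (hc : 0 ≤ c) {p q : R[X]} {i j : ℕ}
    (hp : p.IsMinGaussNormIndex v c i) (hq : q.IsMinGaussNormIndex v c j) (hij : i ≠ j) :
    max (p.gaussNorm v c) (q.gaussNorm v c) ≤ (p + q).gaussNorm v c := by
  wlog hlt : i < j generalizing p q i j
  · rw [add_comm, max_comm]
    exact this hq hp hij.symm (by omega)
  rcases le_or_gt (q.gaussNorm v c) (p.gaussNorm v c) with hqp | hpq
  · rw [max_eq_left hqp, hp.1]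
    exact le_gaussNorm_add_of_lt hna hc (by linarith [hq.2 i hlt, hp.1])
  · rw [max_eq_right hpq.le, hq.1, add_comm]
    exact le_gaussNorm_add_of_lt hna hc (by linarith [le_gaussNorm v p hc j, hq.1])

end MinGaussNormIndex

theorem gaussNorm_mul_sq_le_gaussNorm_sq_sub_mul_sq {R : Type*} [Ring R] [NoZeroDivisors R]
    {v : AbsoluteValue R ℝ} (hna : IsNonarchimedean v) {c : ℝ} (hc : 0 < c) {A : R[X]} {i : ℕ}
    (hA : A.IsMinGaussNormIndex v c i) (hi : Odd i) (P Q : R[X]) (hQ : Q ≠ 0) :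
    A.gaussNorm v c * Q.gaussNorm v c ^ 2 ≤ (P ^ 2 - A * Q ^ 2).gaussNorm v c := by
  have hAQ : (-A * Q ^ 2).gaussNorm v c = A.gaussNorm v c * Q.gaussNorm v c ^ 2 := by
    rw [gaussNorm_mul hna hc, gaussNorm_neg, pow_two, gaussNorm_mul hna hc, pow_two]
  rw [sub_eq_add_neg, ← neg_mul, ← hAQ]
  rcases eq_or_ne P 0 with rfl | hP
  · simp
  obtain ⟨k, hk⟩ : ∃ k, P.IsMinGaussNormIndex v c k := P.exists_min_eq_gaussNorm v hc.le
  obtain ⟨l, hl⟩ : ∃ l, Q.IsMinGaussNormIndex v c l := Q.exists_min_eq_gaussNorm v hc.le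
  have hA0 := hA.ne_zero hi.pos
  have hPP : (P ^ 2).IsMinGaussNormIndex v c (k + k) := pow_two P ▸ hk.mul hna hc hk hP hP
  have hQQ : (Q ^ 2).IsMinGaussNormIndex v c (l + l) := pow_two Q ▸ hl.mul hna hc hl hQ hQ
  have hAQQ := hA.neg.mul hna hc hQQ (neg_ne_zero.mpr hA0) (pow_ne_zero 2 hQ)
  exact (le_max_right _ _).trans (max_le_gaussNorm_add hna hc.le hPP hAQQ (by grind))

end Polynomial

section CompletedResidueField

variable {K H : Type*} [Field K] [Field H] {v : AbsoluteValue K ℝ} {c : ℝ}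
  (ι : RatFunc K →+* H) {w : AbsoluteValue H ℝ}

theorem exists_gaussNorm_sq_sub_mul_sq_lt (hw : IsNonarchimedean w)
    (hnorm : ∀ P : K[X], w (ι (algebraMap K[X] (RatFunc K) P)) = P.gaussNorm v c)
    (hdense : ∀ x : H, ∀ ε : ℝ, 0 < ε → ∃ f : RatFunc K, w (x - ι f) < ε)
    {A : K[X]} (hA : A ≠ 0) {h : H} (hh : h ^ 2 = ι (algebraMap K[X] (RatFunc K) A)) :
    ∃ P Q : K[X], Q ≠ 0 ∧
      (P ^ 2 - A * Q ^ 2).gaussNorm v c < A.gaussNorm v c * Q.gaussNorm v c ^ 2 := by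
  set φ : K[X] →+* H := ι.comp (algebraMap K[X] (RatFunc K))
  have hφ : ∀ P, w (φ P) = P.gaussNorm v c := hnorm
  have hφA : φ A = h ^ 2 := hh.symm
  have hwh : w h ^ 2 = A.gaussNorm v c := by rw [← map_pow, ← hφA, hφ]
  have hh0 : 0 < w h := by
    refine w.pos fun h0 => hA ?_
    simpa [h0, φ] using hφA
  obtain ⟨f, hf⟩ := hdense h (w h) hh0
  set u := ι f
  have hsub : w (u - h) < w h := by rwa [w.map_sub]
  have hadd : w (u + h) ≤ w h := by
    have h2 : w 2 ≤ 1 := by exact_mod_cast hw.apply_natCast_le_one (n := 2)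
    calc w (u + h) = w ((u - h) + 2 * h) := by ring_nf
      _ ≤ max (w (u - h)) (w (2 * h)) := hw _ _
      _ ≤ w h := max_le hsub.le (by rw [map_mul]; nlinarith [w.nonneg h])
  have hlt : w (u ^ 2 - h ^ 2) < w h ^ 2 := by
    rw [sq_sub_sq, map_mul]
    nlinarith [w.nonneg (u + h), w.nonneg (u - h)]
  refine ⟨f.num, f.denom, f.denom_ne_zero, ?_⟩
  have hfQ : u * φ f.denom = φ f.num := by
    simp only [u, φ, RingHom.comp_apply, ← map_mul]
    rw [← (eq_div_iff (RatFunc.algebraMap_ne_zero f.denom_ne_zero)).mp f.num_div_denom.symm]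
  have hQ : 0 < f.denom.gaussNorm v c := by
    rw [← hφ]
    exact w.pos (by simpa [φ] using f.denom_ne_zero)
  have hclear : (u ^ 2 - h ^ 2) * φ f.denom ^ 2 = φ (f.num ^ 2 - A * f.denom ^ 2) := by
    rw [map_sub, map_mul, map_pow, map_pow, ← hfQ, hφA]
    ring
  rw [← hφ, ← hclear, map_mul, map_pow, hφ, ← hwh]
  exact mul_lt_mul_of_pos_right hlt (by positivity)

theorem not_exists_sq_eq_of_isMinGaussNormIndex (hv : IsNonarchimedean v) (hc : 0 < c)
    (hw : IsNonarchimedean w)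
    (hnorm : ∀ P : K[X], w (ι (algebraMap K[X] (RatFunc K) P)) = P.gaussNorm v c)
    (hdense : ∀ x : H, ∀ ε : ℝ, 0 < ε → ∃ f : RatFunc K, w (x - ι f) < ε)
    {A : K[X]} {i : ℕ} (hA : A.IsMinGaussNormIndex v c i) (hi : Odd i) :
    ¬ ∃ h : H, h ^ 2 = ι (algebraMap K[X] (RatFunc K) A) := by
  rintro ⟨h, hh⟩
  obtain ⟨P, Q, hQ, hlt⟩ :=
    exists_gaussNorm_sq_sub_mul_sq_lt ι hw hnorm hdense (hA.ne_zero hi.pos) hh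
  exact (gaussNorm_mul_sq_le_gaussNorm_sq_sub_mul_sq hv hc hA hi P Q hQ).not_gt hlt

end CompletedResidueField

theorem irreducible_X_sq_sub_X_add_C {F : Type*} [Field F] {a : F}
    (ha : ¬ ∃ r : F, r ^ 2 = 1 - 4 * a) : Irreducible (X ^ 2 - X + C a) := by
  have hdeg : (X ^ 2 - X + C a).natDegree = 2 := by compute_degree!
  rw [irreducible_iff_roots_eq_zero_of_degree_le_three (by rw [hdeg]) (by rw [hdeg]; norm_num),
    Multiset.eq_zero_iff_forall_notMem]
  intro z hz
  rw [mem_roots (ne_zero_of_natDegree_gt (n := 0) (by rw [hdeg]; norm_num)), IsRoot,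
    eval_add, eval_sub, eval_pow, eval_X, eval_C] at hz
  exact ha ⟨2 * z - 1, by linear_combination 4 * hz⟩

theorem gaussNormR_eq_gaussNorm {K : Type*} [NormedField K] {R : ℝ} (hR : 0 ≤ R) (P : K[X]) :
    gaussNormR R P = P.gaussNorm (NormedField.toAbsoluteValue K) R := by
  have hle : ∀ k, ‖P.coeff k‖ * R ^ k ≤ gaussNormR R P := by
    intro k
    rcases le_or_gt k P.natDegree with hk | hk
    · exact Finset.le_sup' (fun k => ‖P.coeff k‖ * R ^ k) (by simp; omega)
    · rw [coeff_eq_zero_of_natDegree_lt hk, norm_zero, zero_mul]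
      exact (by positivity : (0 : ℝ) ≤ ‖P.coeff 0‖ * R ^ 0).trans
        (Finset.le_sup' (fun k => ‖P.coeff k‖ * R ^ k) (by simp))
  exact le_antisymm
    (Finset.sup'_le _ _ fun k _ => le_gaussNorm (NormedField.toAbsoluteValue K) P hR k)
    (gaussNorm_le hle)

theorem stmt19_general {K : Type*} [NontriviallyNormedField K] [IsUltrametricDist K]
    (h2 : ‖(2 : K)‖ = 1) (R : ℝ) (hR : 1 < R)
    (H : Type*) [Field H] (ι : RatFunc K →+* H)
    (w : AbsoluteValue H ℝ)
    (hna : ∀ x y : H, w (x + y) ≤ max (w x) (w y))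
    (hnorm : ∀ P : Polynomial K,
      w (ι (algebraMap (Polynomial K) (RatFunc K) P)) = gaussNormR R P)
    (hdense : ∀ x : H, ∀ ε : ℝ, 0 < ε → ∃ f : RatFunc K, w (x - ι f) < ε) :
    (¬ ∃ h : H, h ^ 2 = ι RatFunc.X) ∧
      Irreducible (X ^ 2 - X + C (ι RatFunc.X) : Polynomial H) := by
  set v := NormedField.toAbsoluteValue K
  have hR0 : 0 < R := by linarith
  have hnorm' : ∀ P : K[X], w (ι (algebraMap K[X] (RatFunc K) P)) = P.gaussNorm v R :=
    fun P => (hnorm P).trans (gaussNormR_eq_gaussNorm hR0.le P)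
  have hlinear : ∀ a b : K, ‖a‖ < ‖b‖ * R →
      ¬ ∃ h : H, h ^ 2 = ι (algebraMap K[X] (RatFunc K) (C a + C b * X)) := fun a b hab =>
    not_exists_sq_eq_of_isMinGaussNormIndex ι IsUltrametricDist.isNonarchimedean_norm hR0 hna
      hnorm' hdense (isMinGaussNormIndex_C_add_C_mul_X hR0.le hab) odd_one
  refine ⟨?_, irreducible_X_sq_sub_X_add_C ?_⟩
  · simpa using hlinear 0 1 (by simpa using hR0)
  · have h4 : ‖(-4 : K)‖ = 1 := by
      rw [norm_neg, show (4 : K) = 2 * 2 by norm_num, norm_mul, h2, one_mul]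
    convert hlinear 1 (-4) (by simpa [h4] using hR) using 4
    simp [map_ofNat, sub_eq_add_neg]

/-- Let `K` be a complete algebraically closed non-archimedean field of
residue characteristic ≠ 2, `R > 1`, and let `H = ℋ(ζ_{0,R})` be the completed residue field
at the point `x = ζ_{0,R}` of the parameter line: a complete non-archimedean valued field
containing `K(λ)` densely, with `|Σ c_k λ^k| = max ‖c_k‖ R^k`.  Then `λ` has no square root
in `H` (while the degree-2 extension `H(√λ)` contains one), and the fixed-point polynomial
`z² − z + λ` of the family `f_λ(z) = z² + λ` is irreducible over `H`; hence each of its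
roots ξ (the type I repelling fixed points over `x`) generates a degree-2 extension of `H`,
i.e. has multiplicity `[ℋ(ξ) : ℋ(x)] = 2`. -/
theorem stmt19 {K : Type*} [NontriviallyNormedField K] [IsUltrametricDist K]
    [CompleteSpace K] [IsAlgClosed K]
    (h2 : ‖(2 : K)‖ = 1) (R : ℝ) (hR : 1 < R)
    (H : Type*) [Field H] (ι : RatFunc K →+* H)
    (w : AbsoluteValue H ℝ)
    (hna : ∀ x y : H, w (x + y) ≤ max (w x) (w y))
    (hnorm : ∀ P : Polynomial K,
      w (ι (algebraMap (Polynomial K) (RatFunc K) P)) = gaussNormR R P)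
    (hdense : ∀ x : H, ∀ ε : ℝ, 0 < ε → ∃ f : RatFunc K, w (x - ι f) < ε)
    (hcomplete : ∀ f : ℕ → H,
      (∀ ε : ℝ, 0 < ε → ∃ N : ℕ, ∀ m ≥ N, ∀ n ≥ N, w (f m - f n) < ε) →
      ∃ x : H, ∀ ε : ℝ, 0 < ε → ∃ N : ℕ, ∀ n ≥ N, w (f n - x) < ε) :
    (¬ ∃ h : H, h ^ 2 = ι RatFunc.X) ∧
      Irreducible (X ^ 2 - X + C (ι RatFunc.X) : Polynomial H) :=
  stmt19_general h2 R hR H ι w hna hnorm hdense
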